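/- arXiv:2202.04957 — 2 statements merged into one kernel-verified Lean document; each statement's English description precedes it below -/
import Mathlib

section
/- Let G be a graph with Laplacian L, a, b twin vertices, M = (e_a - e_b)(e_a - e_b)^T, α ∈ ℝ, and q an index distinct from a and b. If ατ ∈ πℤ, then exp(-i τ (L + α M))(e_a - e_q) = exp(-i τ L)(e_a - e_q). Consequently, if G has Laplacian perfect pair state transfer from e_a - e_q to some pair state e_c - e_d at time τ (i.e., exp(-iτL)(e_a - e_q) = γ(e_c - e_d) with |γ| = 1), then the perturbed graph G + α{a,b} also has it. -/
/-!
Since `a` and `b` are twins, `w = e_a - e_b` is an eigenvector of the symmetric matrix `L`, so `L`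
commutes with `M = w wᵀ` and `exp (-iτ(L + αM)) = exp (-iτL) exp (-iταM)`. As `w ⬝ w = 2`, the
matrix `M / 2` is idempotent, and `exp (z P) = 1 - P + e^z P` for idempotent `P`; hence
`exp (-iταM) = 1 - M/2 + e^{-2iατ} M/2 = 1` when `ατ ∈ πℤ`. The two evolution operators are
therefore equal, which gives both claims.
-/

open Matrix Complex

open NormedSpace in
theorem IsIdempotentElem.exp_smul {𝕂 𝔸 : Type*} [RCLike 𝕂] [NormedRing 𝔸] [NormedAlgebra 𝕂 𝔸]
    [CompleteSpace 𝔸] {P : 𝔸} (hP : IsIdempotentElem P) (z : 𝕂) :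
    exp (z • P) = 1 - P + exp z • P := by
  have hterm : ∀ k : ℕ, (k.factorial⁻¹ : 𝕂) • (z • P) ^ k =
      (if k = 0 then 1 - P else 0) + ((k.factorial⁻¹ : 𝕂) • z ^ k) • P := by
    rintro (_ | k)
    · simp
    · simp [smul_pow, hP.pow_succ_eq, smul_smul]
  have hsum := (hasSum_ite_eq 0 (1 - P)).add ((exp_series_hasSum_exp' (𝕂 := 𝕂) z).smul_const P)
  simp only [← hterm] at hsum
  exact (exp_series_hasSum_exp' (𝕂 := 𝕂) (z • P)).unique hsum

namespace Matrix

variable {n : Type*} [Fintype n]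

theorem dotProduct_single_sub_single_self {R : Type*} [DecidableEq n] [Ring R]
    {a b : n} (hab : a ≠ b) :
    (Pi.single a 1 - Pi.single b 1 : n → R) ⬝ᵥ (Pi.single a 1 - Pi.single b 1) = 2 := by
  simp [dotProduct_sub, hab, hab.symm, one_add_one_eq_two]

theorem IsSymm.commute_vecMulVec_self {R : Type*} [CommSemiring R] {A : Matrix n n R}
    (hA : A.IsSymm) {w : n → R} {μ : R} (hw : A *ᵥ w = μ • w) : Commute A (vecMulVec w w) := by
  have hw' : w ᵥ* A = μ • w := by rw [← mulVec_transpose, hA.eq, hw]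
  change A * vecMulVec w w = vecMulVec w w * A
  rw [mul_vecMulVec, vecMulVec_mul, hw, hw', smul_vecMulVec, vecMulVec_smul]

theorem isIdempotentElem_inv_dotProduct_smul_vecMulVec {𝕂 : Type*} [Field 𝕂] {w : n → 𝕂}
    (hw : w ⬝ᵥ w ≠ 0) : IsIdempotentElem ((w ⬝ᵥ w)⁻¹ • vecMulVec w w) := by
  rw [IsIdempotentElem, smul_mul_smul, vecMulVec_mul_vecMulVec, vecMulVec_smul, smul_smul,
    mul_assoc, inv_mul_cancel₀ hw, mul_one]

theorem exp_smul_vecMulVec_self_eq_one [DecidableEq n] {w : n → ℂ} (hw : w ⬝ᵥ w ≠ 0)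
    {z : ℂ} (hz : Complex.exp (z * (w ⬝ᵥ w)) = 1) : NormedSpace.exp (z • vecMulVec w w) = 1 := by
  let : NormedRing (Matrix n n ℂ) := Matrix.linftyOpNormedRing
  let : NormedAlgebra ℂ (Matrix n n ℂ) := Matrix.linftyOpNormedAlgebra
  set P := (w ⬝ᵥ w)⁻¹ • vecMulVec w w
  calc NormedSpace.exp (z • vecMulVec w w) = NormedSpace.exp ((z * (w ⬝ᵥ w)) • P) := by
        rw [smul_smul, mul_assoc, mul_inv_cancel₀ hw, mul_one]
    _ = 1 - P + NormedSpace.exp (z * (w ⬝ᵥ w)) • P :=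
        (isIdempotentElem_inv_dotProduct_smul_vecMulVec hw).exp_smul _
    _ = 1 := by rw [← Complex.exp_eq_exp_ℂ, hz, one_smul, sub_add_cancel]

end Matrix

namespace SimpleGraph

variable {V : Type*} [DecidableEq V] (G : SimpleGraph V) {a b : V}

theorem adj_swap_iff_of_twins (htwin : ∀ v, v ≠ a → v ≠ b → (G.Adj a v ↔ G.Adj b v)) (v : V) :
    G.Adj a (Equiv.swap a b v) ↔ G.Adj b v := by
  rcases eq_or_ne v a with rfl | hva
  · simpa using G.adj_comm v b
  rcases eq_or_ne v b with rfl | hvb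
  · simp
  · rw [Equiv.swap_apply_of_ne_of_ne hva hvb, htwin v hva hvb]

variable [Fintype V] [DecidableRel G.Adj]

theorem degree_eq_of_twins (htwin : ∀ v, v ≠ a → v ≠ b → (G.Adj a v ↔ G.Adj b v)) :
    G.degree a = G.degree b := by
  rw [← card_neighborFinset_eq_degree, ← card_neighborFinset_eq_degree,
    ← Finset.card_map (Equiv.swap a b).toEmbedding]
  congr 1
  ext v
  simp [Finset.mem_map_equiv, G.adj_swap_iff_of_twins htwin]

theorem lapMatrix_mulVec_single_sub_single_of_twins {R : Type*} [Ring R] (hab : a ≠ b)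
    (htwin : ∀ v, v ≠ a → v ≠ b → (G.Adj a v ↔ G.Adj b v)) :
    G.lapMatrix R *ᵥ (Pi.single a 1 - Pi.single b 1) =
      ((G.degree a : R) + if G.Adj a b then 1 else 0) • (Pi.single a 1 - Pi.single b 1) := by
  ext v
  simp only [lapMatrix_mulVec_apply, Pi.sub_apply, Finset.sum_sub_distrib, Finset.sum_pi_single',
    mem_neighborFinset, Pi.smul_apply, smul_eq_mul]
  rcases eq_or_ne v a with rfl | hva
  · simp [hab]
  rcases eq_or_ne v b with rfl | hvb
  · simp [hab, G.degree_eq_of_twins htwin, G.adj_comm v a]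
    abel
  · simp [hva, hvb, G.adj_comm v, htwin v hva hvb]

end SimpleGraph

theorem pair_lpst_preserved_under_twin_perturbation_case_b_general
    {n : ℕ} (G : SimpleGraph (Fin n)) [DecidableRel G.Adj]
    (a b q : Fin n) (hab : a ≠ b)
    (htwin : ∀ v : Fin n, v ≠ a → v ≠ b → (G.Adj a v ↔ G.Adj b v))
    (α τ : ℝ) (hατ : ∃ k : ℤ, α * τ = k * Real.pi) :
    (NormedSpace.exp ((-(Complex.I * (τ : ℂ))) •
        (G.lapMatrix ℂ + (α : ℂ) •
          vecMulVec ((Pi.single a 1 : Fin n → ℂ) - Pi.single b 1)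
            ((Pi.single a 1 : Fin n → ℂ) - Pi.single b 1)))).mulVec
        ((Pi.single a 1 : Fin n → ℂ) - Pi.single q 1)
      = (NormedSpace.exp ((-(Complex.I * (τ : ℂ))) • G.lapMatrix ℂ)).mulVec
          ((Pi.single a 1 : Fin n → ℂ) - Pi.single q 1)
    ∧ ∀ (c d : Fin n) (γ : ℂ), ‖γ‖ = 1 →
        (NormedSpace.exp ((-(Complex.I * (τ : ℂ))) • G.lapMatrix ℂ)).mulVec
            ((Pi.single a 1 : Fin n → ℂ) - Pi.single q 1)
          = γ • ((Pi.single c 1 : Fin n → ℂ) - Pi.single d 1) →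
        (NormedSpace.exp ((-(Complex.I * (τ : ℂ))) •
            (G.lapMatrix ℂ + (α : ℂ) •
              vecMulVec ((Pi.single a 1 : Fin n → ℂ) - Pi.single b 1)
                ((Pi.single a 1 : Fin n → ℂ) - Pi.single b 1)))).mulVec
            ((Pi.single a 1 : Fin n → ℂ) - Pi.single q 1)
          = γ • ((Pi.single c 1 : Fin n → ℂ) - Pi.single d 1) := by
  set w : Fin n → ℂ := Pi.single a 1 - Pi.single b 1
  obtain ⟨k, hk⟩ := hατ
  have hkC : (α : ℂ) * τ = k * Real.pi := by exact_mod_cast hk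
  have hww : w ⬝ᵥ w = 2 := dotProduct_single_sub_single_self hab
  have hcomm : Commute (G.lapMatrix ℂ) (vecMulVec w w) :=
    (G.isSymm_lapMatrix ℂ).commute_vecMulVec_self
      (G.lapMatrix_mulVec_single_sub_single_of_twins hab htwin)
  have hperiod : Complex.exp (-(Complex.I * τ) * α * (w ⬝ᵥ w)) = 1 := by
    rw [hww, ← Complex.exp_int_mul_two_pi_mul_I (-k)]
    congr 1
    push_cast
    linear_combination (-2 * Complex.I) * hkC
  have hexp : NormedSpace.exp (-(Complex.I * τ) • (G.lapMatrix ℂ + (α : ℂ) • vecMulVec w w)) =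
      NormedSpace.exp (-(Complex.I * τ) • G.lapMatrix ℂ) := by
    rw [smul_add, smul_smul, Matrix.exp_add_of_commute _ _ ((hcomm.smul_left _).smul_right _),
      exp_smul_vecMulVec_self_eq_one (hww ▸ two_ne_zero) hperiod, mul_one]
  exact ⟨by rw [hexp], fun c d γ _ h => by rw [hexp, h]⟩

theorem pair_lpst_preserved_under_twin_perturbation_case_b
    {n : ℕ} (G : SimpleGraph (Fin n)) [DecidableRel G.Adj]
    (a b q : Fin n) (hab : a ≠ b) (hqa : q ≠ a) (hqb : q ≠ b)
    (htwin : ∀ v : Fin n, v ≠ a → v ≠ b → (G.Adj a v ↔ G.Adj b v))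
    (α τ : ℝ) (hατ : ∃ k : ℤ, α * τ = k * Real.pi) :
    (NormedSpace.exp ((-(Complex.I * (τ : ℂ))) •
        (G.lapMatrix ℂ + (α : ℂ) •
          vecMulVec ((Pi.single a 1 : Fin n → ℂ) - Pi.single b 1)
            ((Pi.single a 1 : Fin n → ℂ) - Pi.single b 1)))).mulVec
        ((Pi.single a 1 : Fin n → ℂ) - Pi.single q 1)
      = (NormedSpace.exp ((-(Complex.I * (τ : ℂ))) • G.lapMatrix ℂ)).mulVec
          ((Pi.single a 1 : Fin n → ℂ) - Pi.single q 1)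
    ∧ ∀ (c d : Fin n) (γ : ℂ), ‖γ‖ = 1 →
        (NormedSpace.exp ((-(Complex.I * (τ : ℂ))) • G.lapMatrix ℂ)).mulVec
            ((Pi.single a 1 : Fin n → ℂ) - Pi.single q 1)
          = γ • ((Pi.single c 1 : Fin n → ℂ) - Pi.single d 1) →
        (NormedSpace.exp ((-(Complex.I * (τ : ℂ))) •
            (G.lapMatrix ℂ + (α : ℂ) •
              vecMulVec ((Pi.single a 1 : Fin n → ℂ) - Pi.single b 1)
                ((Pi.single a 1 : Fin n → ℂ) - Pi.single b 1)))).mulVec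
            ((Pi.single a 1 : Fin n → ℂ) - Pi.single q 1)
          = γ • ((Pi.single c 1 : Fin n → ℂ) - Pi.single d 1) :=
  pair_lpst_preserved_under_twin_perturbation_case_b_general G a b q hab htwin α τ hατ
end

section
/- Let G be a graph with Laplacian L, a, b twin vertices, M = (e_a - e_b)(e_a - e_b)^T, α ∈ ℝ. If the pair state e_a - e_b is periodic at time τ in G (i.e., exp(-iτL)(e_a - e_b) = γ(e_a - e_b) with |γ| = 1), then it is periodic at time τ in the perturbed graph with Laplacian L + αM. -/
/-!
For twins `a`, `b` the vector `e_a - e_b` is an eigenvector of the Laplacian, with eigenvalue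
`deg a + [a ~ b]`, and of `M = (e_a - e_b)(e_a - e_b)ᵀ`, with eigenvalue `2`. Hence it is an
eigenvector of `L + αM` with a real eigenvalue `θ`, and `exp(-iτ(L + αM))` acts on it as the
unimodular scalar `exp(-iτθ)`.
-/

open Matrix Complex

namespace Matrix

variable {ι 𝕂 : Type*} [Fintype ι]

section Eigenvector

variable [DecidableEq ι] {A : Matrix ι ι 𝕂} {v : ι → 𝕂} {μ : 𝕂}

theorem pow_mulVec_of_mulVec_eq_smul [CommSemiring 𝕂]
    (h : A *ᵥ v = μ • v) (k : ℕ) : (A ^ k) *ᵥ v = μ ^ k • v := by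
  induction k with
  | zero => simp
  | succ k ih => rw [pow_succ', ← mulVec_mulVec, ih, mulVec_smul, h, smul_smul, ← pow_succ]

open scoped Norms.Operator in
theorem exp_mulVec_of_mulVec_eq_smul [RCLike 𝕂]
    (h : A *ᵥ v = μ • v) : NormedSpace.exp A *ᵥ v = NormedSpace.exp μ • v := by
  have hA := (NormedSpace.exp_series_hasSum_exp' (𝕂 := 𝕂) A).map (mulVec.addMonoidHomLeft v)
    (continuous_id.matrix_mulVec continuous_const)
  have hμ := (NormedSpace.exp_series_hasSum_exp' (𝕂 := 𝕂) μ).smul_const v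
  refine hA.unique (hμ.congr_fun fun k => ?_)
  simp only [Function.comp_apply, mulVec.addMonoidHomLeft, AddMonoidHom.coe_mk, ZeroHom.coe_mk,
    smul_mulVec, pow_mulVec_of_mulVec_eq_smul h, smul_smul, smul_eq_mul]

end Eigenvector

theorem vecMulVec_self_mulVec [CommSemiring 𝕂] (v : ι → 𝕂) :
    vecMulVec v v *ᵥ v = (v ⬝ᵥ v) • v := by
  rw [vecMulVec_mulVec, op_smul_eq_smul]

theorem single_sub_single_dotProduct_self [DecidableEq ι] [Ring 𝕂] {a b : ι} (hab : a ≠ b) :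
    (Pi.single a 1 - Pi.single b 1 : ι → 𝕂) ⬝ᵥ (Pi.single a 1 - Pi.single b 1) = 2 := by
  simp [dotProduct_sub, hab, hab.symm, one_add_one_eq_two]

end Matrix

namespace SimpleGraph

variable {V : Type*} (G : SimpleGraph V)

def AreTwins (a b : V) : Prop := ∀ v, v ≠ a → v ≠ b → (G.Adj a v ↔ G.Adj b v)

variable {G} [Fintype V] [DecidableRel G.Adj] {a b : V}

theorem AreTwins.degree_eq [DecidableEq V] (h : G.AreTwins a b) : G.degree a = G.degree b := by
  rw [← card_neighborFinset_eq_degree, ← card_neighborFinset_eq_degree,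
    ← Finset.card_map (Equiv.swap a b).toEmbedding]
  congr 1
  ext u
  rw [Finset.mem_map_equiv, mem_neighborFinset, mem_neighborFinset, Equiv.symm_swap]
  rcases eq_or_ne u a with rfl | hua
  · simp [G.adj_comm]
  rcases eq_or_ne u b with rfl | hub
  · simp
  · rw [Equiv.swap_apply_of_ne_of_ne hua hub, h u hua hub]

theorem AreTwins.lapMatrix_mulVec [DecidableEq V] {R : Type*} [Ring R] (hab : a ≠ b)
    (h : G.AreTwins a b) :
    G.lapMatrix R *ᵥ (Pi.single a 1 - Pi.single b 1)
      = ((G.degree a + if G.Adj a b then 1 else 0 : ℕ) : R) •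
          (Pi.single a 1 - Pi.single b 1) := by
  ext i
  rw [lapMatrix_mulVec_apply]
  simp only [Pi.sub_apply, Pi.smul_apply, smul_eq_mul, Finset.sum_sub_distrib,
    Finset.sum_pi_single', mem_neighborFinset, Nat.cast_add, Nat.cast_ite, Nat.cast_one,
    Nat.cast_zero]
  rcases eq_or_ne i a with rfl | hia
  · simp [hab]
  rcases eq_or_ne i b with rfl | hib
  · simp [hab, h.degree_eq, G.adj_comm i a]
    abel
  · simp [hia, hib, G.adj_comm i, h i hia hib]

end SimpleGraph

theorem twin_pair_periodicity_preserved_general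
    {n : ℕ} (G : SimpleGraph (Fin n)) [DecidableRel G.Adj]
    (a b : Fin n) (hab : a ≠ b)
    (htwin : ∀ v : Fin n, v ≠ a → v ≠ b → (G.Adj a v ↔ G.Adj b v))
    (α τ : ℝ) :
    ∃ γ' : ℂ, ‖γ'‖ = 1 ∧
      (NormedSpace.exp ((-(Complex.I * (τ : ℂ))) •
          (G.lapMatrix ℂ + (α : ℂ) •
            vecMulVec ((Pi.single a 1 : Fin n → ℂ) - Pi.single b 1)
              ((Pi.single a 1 : Fin n → ℂ) - Pi.single b 1)))).mulVec
          ((Pi.single a 1 : Fin n → ℂ) - Pi.single b 1)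
        = γ' • ((Pi.single a 1 : Fin n → ℂ) - Pi.single b 1) := by
  set v : Fin n → ℂ := Pi.single a 1 - Pi.single b 1
  set d : ℕ := G.degree a + if G.Adj a b then 1 else 0
  have hL : G.lapMatrix ℂ *ᵥ v = (d : ℂ) • v :=
    SimpleGraph.AreTwins.lapMatrix_mulVec hab htwin
  have hM : vecMulVec v v *ᵥ v = (2 : ℂ) • v := by
    rw [vecMulVec_self_mulVec, single_sub_single_dotProduct_self hab]
  have heig : (-(I * τ) • (G.lapMatrix ℂ + (α : ℂ) • vecMulVec v v)) *ᵥ v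
      = (((-τ * (d + 2 * α) : ℝ) : ℂ) * I) • v := by
    rw [smul_mulVec, add_mulVec, smul_mulVec, hL, hM, smul_smul, ← add_smul, smul_smul]
    congr 1
    push_cast
    ring
  refine ⟨exp ((-τ * (d + 2 * α) : ℝ) * I), norm_exp_ofReal_mul_I _, ?_⟩
  rw [exp_eq_exp_ℂ]
  exact exp_mulVec_of_mulVec_eq_smul heig

theorem twin_pair_periodicity_preserved
    {n : ℕ} (G : SimpleGraph (Fin n)) [DecidableRel G.Adj]
    (a b : Fin n) (hab : a ≠ b)
    (htwin : ∀ v : Fin n, v ≠ a → v ≠ b → (G.Adj a v ↔ G.Adj b v))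
    (α τ : ℝ) (γ : ℂ) (hγ : ‖γ‖ = 1)
    (hper : (NormedSpace.exp ((-(Complex.I * (τ : ℂ))) • G.lapMatrix ℂ)).mulVec
        ((Pi.single a 1 : Fin n → ℂ) - Pi.single b 1)
      = γ • ((Pi.single a 1 : Fin n → ℂ) - Pi.single b 1)) :
    ∃ γ' : ℂ, ‖γ'‖ = 1 ∧
      (NormedSpace.exp ((-(Complex.I * (τ : ℂ))) •
          (G.lapMatrix ℂ + (α : ℂ) •
            vecMulVec ((Pi.single a 1 : Fin n → ℂ) - Pi.single b 1)
              ((Pi.single a 1 : Fin n → ℂ) - Pi.single b 1)))).mulVec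
          ((Pi.single a 1 : Fin n → ℂ) - Pi.single b 1)
        = γ' • ((Pi.single a 1 : Fin n → ℂ) - Pi.single b 1) :=
  twin_pair_periodicity_preserved_general G a b hab htwin α τ
end
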